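/- Let 𝔛 be a continuous fiber bundle of C*-algebras over an extremally disconnected compact Hausdorff space Q, given fiberwise as a C*-algebra 𝔛(q) for each q. Then the space C∞(Q,𝔛) of equivalence classes of almost-global continuous sections (sections defined on comeager subsets, identified when they agree on the common domain), with pointwise operations, involution, and the C(∞)(Q,ℝ)-valued norm p_u(q) = ‖u(q)‖_q (extended continuously to Q), satisfies the C*-identities: ‖û·v̂‖ ≤ ‖û‖·‖v̂‖, ‖û*‖ = ‖û‖, and ‖û*·û‖ = ‖û‖². -/

import Mathlib

/-!
The three `C*`-identities hold pointwise on `Du ∩ Dv`, which is comeager and hence dense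
because `Q` is a Baire space; continuous `EReal`-valued functions that are ordered (or equal)
on a dense set are ordered (or equal) everywhere.
-/

/-- `C∞(Q, ℝ)`: continuous extended-real-valued functions on `Q` taking infinite
values only on a nowhere dense set. -/
def Cinf (Q : Type*) [TopologicalSpace Q] : Type _ :=
  {f : C(Q, EReal) // IsNowhereDense {q | f q = ⊤ ∨ f q = ⊥}}

noncomputable instance Cinf.instPartialOrder (Q : Type*) [TopologicalSpace Q] :
    PartialOrder (Cinf Q) :=
  PartialOrder.lift (fun f => (f.1 : Q → EReal))
    (fun _ _ h => Subtype.ext (ContinuousMap.ext fun q => congrFun h q))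

namespace Cinf

variable {Q : Type*} [TopologicalSpace Q] {f g : Cinf Q} {D : Set Q}

theorem le_of_dense (hD : Dense D) (h : ∀ q ∈ D, f.1 q ≤ g.1 q) : f ≤ g :=
  fun q => le_on_closure h f.1.continuous.continuousOn g.1.continuous.continuousOn (hD q)

theorem ext_of_dense (hD : Dense D) (h : ∀ q ∈ D, f.1 q = g.1 q) : f = g :=
  Subtype.ext <| ContinuousMap.ext <| congrFun <| f.1.continuous.ext_on hD g.1.continuous h

end Cinf

theorem stmt_19_general (Q : Type*) [TopologicalSpace Q] [CompactSpace Q] [T2Space Q]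
    (A : Q → Type*) [∀ q, NonUnitalNormedRing (A q)] [∀ q, StarRing (A q)]
    [∀ q, CStarRing (A q)]
    (Du Dv : Set Q) (hDu : Du ∈ residual Q) (hDv : Dv ∈ residual Q)
    (u : ∀ q, A q) (v : ∀ q, A q)
    (pu puv pq pustar pusu psq : Cinf Q)
    (hpu : ∀ q ∈ Du, pu.1 q = (‖u q‖ : EReal))
    (hpuv : ∀ q ∈ Du ∩ Dv, puv.1 q = (‖u q * v q‖ : EReal))
    (hpq : ∀ q ∈ Du ∩ Dv, pq.1 q = ((‖u q‖ * ‖v q‖ : ℝ) : EReal))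
    (hpustar : ∀ q ∈ Du, pustar.1 q = (‖star (u q)‖ : EReal))
    (hpusu : ∀ q ∈ Du, pusu.1 q = (‖star (u q) * u q‖ : EReal))
    (hpsq : ∀ q ∈ Du, psq.1 q = ((‖u q‖ ^ 2 : ℝ) : EReal)) :
    puv ≤ pq ∧ pustar = pu ∧ pusu = psq := by
  have hDu_dense : Dense Du := dense_of_mem_residual hDu
  have hDuv_dense : Dense (Du ∩ Dv) := dense_of_mem_residual (Filter.inter_mem hDu hDv)
  refine ⟨Cinf.le_of_dense hDuv_dense fun q hq => ?_, Cinf.ext_of_dense hDu_dense fun q hq => ?_,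
    Cinf.ext_of_dense hDu_dense fun q hq => ?_⟩
  · rw [hpuv q hq, hpq q hq]
    exact_mod_cast norm_mul_le (u q) (v q)
  · rw [hpustar q hq, hpu q hq, norm_star]
  · rw [hpusu q hq, hpsq q hq, CStarRing.norm_star_mul_self, sq]

/-- Let `𝔛 = (A q)_{q ∈ Q}` be a continuous fiber bundle of `C*`-algebras over an
extremally disconnected compact Hausdorff space `Q`.  For almost-global
continuous sections `u, v` (given on comeager domains `Du, Dv`, with continuous
pointwise norm), the unique continuous extensions to `C∞(Q, ℝ)` of the pointwise
norms of `u·v`, `u*` and `u*·u` satisfy the `C*`-identities in the lattice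
order of `C∞(Q, ℝ)`:
`‖û·v̂‖ ≤ ‖û‖·‖v̂‖`, `‖û*‖ = ‖û‖`, and `‖û*·û‖ = ‖û‖²`. -/
theorem stmt_19 (Q : Type*) [TopologicalSpace Q] [CompactSpace Q] [T2Space Q]
    [ExtremallyDisconnected Q]
    (A : Q → Type*) [∀ q, NonUnitalNormedRing (A q)] [∀ q, StarRing (A q)]
    [∀ q, CStarRing (A q)] [∀ q, NormedStarGroup (A q)]
    (Du Dv : Set Q) (hDu : Du ∈ residual Q) (hDv : Dv ∈ residual Q)
    (u : ∀ q, A q) (v : ∀ q, A q)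
    (hcu : ContinuousOn (fun q => (‖u q‖ : EReal)) Du)
    (hcv : ContinuousOn (fun q => (‖v q‖ : EReal)) Dv)
    (pu pv puv pq pustar pusu psq : Cinf Q)
    (hpu : ∀ q ∈ Du, pu.1 q = (‖u q‖ : EReal))
    (hpv : ∀ q ∈ Dv, pv.1 q = (‖v q‖ : EReal))
    (hpuv : ∀ q ∈ Du ∩ Dv, puv.1 q = (‖u q * v q‖ : EReal))
    (hpq : ∀ q ∈ Du ∩ Dv, pq.1 q = ((‖u q‖ * ‖v q‖ : ℝ) : EReal))
    (hpustar : ∀ q ∈ Du, pustar.1 q = (‖star (u q)‖ : EReal))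
    (hpusu : ∀ q ∈ Du, pusu.1 q = (‖star (u q) * u q‖ : EReal))
    (hpsq : ∀ q ∈ Du, psq.1 q = ((‖u q‖ ^ 2 : ℝ) : EReal)) :
    puv ≤ pq ∧ pustar = pu ∧ pusu = psq :=
  stmt_19_general Q A Du Dv hDu hDv u v pu puv pq pustar pusu psq hpu hpuv hpq hpustar hpusu hpsq
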